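/- Let H be a finite-dimensional complex inner product space with anticommuting square-zero operators ∂, ∂̄ and adjoints ∂*, ∂̄*. Then H = ker Δ_A ⊕ (im ∂ + im ∂̄) ⊕ im((∂∂̄)*) orthogonally, where Δ_A is the Aeppli Laplacian; consequently ker Δ_A is isomorphic to the Aeppli cohomology (ker ∂∂̄)/(im ∂ + im ∂̄). -/

import Mathlib

/-!
Write `p = ∂`, `q = ∂̄` and `ps`, `qs` for their adjoints. Expanding `⟪Δ_A x, x⟫` gives a sum of
six squared norms, so `ker Δ_A = ker ∂* ∩ ker ∂̄* ∩ ker ∂∂̄`, which is the orthogonal complement of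
`im ∂ + im ∂̄ + im (∂∂̄)*`. As `ker ∂∂̄ = (im (∂∂̄)*)ᗮ` contains `im ∂ + im ∂̄`, the space
`ker Δ_A` is the orthogonal complement of `im ∂ + im ∂̄` inside `ker ∂∂̄`, hence a complement
mapping isomorphically onto the Aeppli cohomology.
-/

/-- The Aeppli Laplacian. -/
def deltaA {H : Type*} [AddCommGroup H] [Module ℂ H]
    (p q ps qs : H →ₗ[ℂ] H) : H →ₗ[ℂ] H :=
  p ∘ₗ ps + q ∘ₗ qs + (qs ∘ₗ ps) ∘ₗ (p ∘ₗ q) + (p ∘ₗ q) ∘ₗ (qs ∘ₗ ps)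
    + (p ∘ₗ qs) ∘ₗ (q ∘ₗ ps) + (q ∘ₗ ps) ∘ₗ (p ∘ₗ qs)

open LinearMap Submodule

namespace Submodule

variable {R M : Type*} [Ring R] [AddCommGroup M] [Module R M]

noncomputable def equivQuotientComapOfDisjointOfSupEq {K U N : Submodule R M}
    (hd : Disjoint K U) (hs : K ⊔ U = N) : K ≃ₗ[R] N ⧸ comap N.subtype U :=
  LinearEquiv.ofBijective ((comap N.subtype U).mkQ ∘ₗ inclusion (hs ▸ le_sup_left)) <| by
    constructor
    · rw [← ker_eq_bot, eq_bot_iff]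
      intro x hx
      have hxU : (x : M) ∈ U := by simpa [Quotient.mk_eq_zero] using hx
      simpa using hd.le_bot ⟨x.2, hxU⟩
    · intro z
      obtain ⟨y, rfl⟩ := mkQ_surjective _ z
      obtain ⟨k, hk, u, hu, hy⟩ := mem_sup.mp (hs ▸ y.2 : (y : M) ∈ K ⊔ U)
      refine ⟨⟨k, hk⟩, (Quotient.eq _).mpr ?_⟩
      have : (k : M) - y = -u := by rw [← hy]; abel
      simpa [this] using hu

end Submodule

section Adjoint

variable {𝕜 E F : Type*} [RCLike 𝕜] [NormedAddCommGroup E] [InnerProductSpace 𝕜 E]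
  [NormedAddCommGroup F] [InnerProductSpace 𝕜 F] {f : E →ₗ[𝕜] F} {g : F →ₗ[𝕜] E}

theorem inner_apply_eq_inner_apply_symm (hfg : ∀ x y, inner 𝕜 (f x) y = inner 𝕜 x (g y))
    (x : F) (y : E) : inner 𝕜 (g x) y = inner 𝕜 x (f y) := by
  rw [← inner_conj_symm, ← hfg, inner_conj_symm]

theorem orthogonal_range_eq_ker_of_inner_eq (hfg : ∀ x y, inner 𝕜 (f x) y = inner 𝕜 x (g y)) :
    (range f)ᗮ = ker g := by
  ext y
  simp only [mem_orthogonal, mem_range, forall_exists_index, forall_apply_eq_imp_iff, hfg, mem_ker]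
  exact ⟨fun h => inner_self_eq_zero.mp (h _), fun h x => by rw [h, inner_zero_right]⟩

end Adjoint

section Aeppli

variable {H : Type*} [NormedAddCommGroup H] [InnerProductSpace ℂ H] {p q ps qs : H →ₗ[ℂ] H}

theorem range_sup_range_le_ker_comp (hp : p ∘ₗ p = 0) (hq : q ∘ₗ q = 0)
    (hpq : p ∘ₗ q + q ∘ₗ p = 0) : range p ⊔ range q ≤ ker (p ∘ₗ q) := by
  refine sup_le ?_ ?_ <;> rintro _ ⟨x, rfl⟩ <;> rw [mem_ker]
  · simpa [show p (p x) = 0 from congr($hp x)] using congr($hpq (p x))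
  · simpa using congr(p $(congr($hq x)))

theorem inner_deltaA_self (hps : ∀ x y, inner ℂ (p x) y = inner ℂ x (ps y))
    (hqs : ∀ x y, inner ℂ (q x) y = inner ℂ x (qs y)) (x : H) :
    inner ℂ (deltaA p q ps qs x) x =
      ((‖ps x‖ ^ 2 + ‖qs x‖ ^ 2 + ‖p (q x)‖ ^ 2 + ‖qs (ps x)‖ ^ 2 + ‖q (ps x)‖ ^ 2
        + ‖p (qs x)‖ ^ 2 : ℝ) : ℂ) := by
  have hps' := inner_apply_eq_inner_apply_symm hps
  have hqs' := inner_apply_eq_inner_apply_symm hqs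
  simp only [deltaA, LinearMap.add_apply, comp_apply, inner_add_left]
  rw [hps (ps x), hqs (qs x), hqs' (ps (p (q x))), hps' (p (q x)), hps (q (qs (ps x))),
    hqs (qs (ps x)), hps (qs (q (ps x))), hqs' (q (ps x)), hqs (ps (p (qs x))), hps' (p (qs x))]
  simp only [inner_self_eq_norm_sq_to_K]
  norm_cast

theorem ker_deltaA (hps : ∀ x y, inner ℂ (p x) y = inner ℂ x (ps y))
    (hqs : ∀ x y, inner ℂ (q x) y = inner ℂ x (qs y)) :
    ker (deltaA p q ps qs) = ker ps ⊓ ker qs ⊓ ker (p ∘ₗ q) := by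
  ext x
  simp only [mem_inf, mem_ker, comp_apply]
  constructor
  · intro hx
    have h := inner_deltaA_self hps hqs x
    rw [hx, inner_zero_left, eq_comm, Complex.ofReal_eq_zero] at h
    refine ⟨⟨?_, ?_⟩, ?_⟩ <;> rw [← norm_eq_zero, ← sq_eq_zero_iff] <;>
      linarith [sq_nonneg ‖ps x‖, sq_nonneg ‖qs x‖, sq_nonneg ‖p (q x)‖,
        sq_nonneg ‖qs (ps x)‖, sq_nonneg ‖q (ps x)‖, sq_nonneg ‖p (qs x)‖]
  · rintro ⟨⟨h₁, h₂⟩, h₃⟩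
    simp [deltaA, h₁, h₂, h₃]

theorem ker_comp_eq_orthogonal_range (hps : ∀ x y, inner ℂ (p x) y = inner ℂ x (ps y))
    (hqs : ∀ x y, inner ℂ (q x) y = inner ℂ x (qs y)) :
    ker (p ∘ₗ q) = (range (qs ∘ₗ ps))ᗮ :=
  (orthogonal_range_eq_ker_of_inner_eq fun x y => by
    rw [comp_apply, comp_apply, inner_apply_eq_inner_apply_symm hqs,
      inner_apply_eq_inner_apply_symm hps]).symm

theorem orthogonal_sup_eq_ker_deltaA (hps : ∀ x y, inner ℂ (p x) y = inner ℂ x (ps y))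
    (hqs : ∀ x y, inner ℂ (q x) y = inner ℂ x (qs y)) :
    (range p ⊔ range q ⊔ range (qs ∘ₗ ps))ᗮ = ker (deltaA p q ps qs) := by
  rw [← inf_orthogonal, ← inf_orthogonal, orthogonal_range_eq_ker_of_inner_eq hps,
    orthogonal_range_eq_ker_of_inner_eq hqs, ← ker_comp_eq_orthogonal_range hps hqs,
    ker_deltaA hps hqs]

end Aeppli

/-- Orthogonal decomposition `H = ker Δ_A ⊕ (im ∂ + im ∂̄) ⊕ im (∂∂̄)*`, and the
resulting isomorphism between `Δ_A`-harmonic elements and Aeppli cohomology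
`(ker ∂∂̄)/(im ∂ + im ∂̄)`. -/
theorem stmt11 {H : Type*} [NormedAddCommGroup H] [InnerProductSpace ℂ H]
    [FiniteDimensional ℂ H]
    (p q ps qs : H →ₗ[ℂ] H)
    (hp : p ∘ₗ p = 0) (hq : q ∘ₗ q = 0) (hpq : p ∘ₗ q + q ∘ₗ p = 0)
    (hps : ∀ x y : H, (inner ℂ (p x) y : ℂ) = inner ℂ x (ps y))
    (hqs : ∀ x y : H, (inner ℂ (q x) y : ℂ) = inner ℂ x (qs y)) :
    (∀ v : H, ∃ a ∈ LinearMap.ker (deltaA p q ps qs),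
      ∃ b ∈ LinearMap.range p ⊔ LinearMap.range q,
        ∃ c ∈ LinearMap.range (qs ∘ₗ ps), v = a + b + c) ∧
    (∀ a ∈ LinearMap.ker (deltaA p q ps qs),
      ∀ b ∈ LinearMap.range p ⊔ LinearMap.range q, (inner ℂ a b : ℂ) = 0) ∧
    (∀ a ∈ LinearMap.ker (deltaA p q ps qs),
      ∀ c ∈ LinearMap.range (qs ∘ₗ ps), (inner ℂ a c : ℂ) = 0) ∧
    (∀ b ∈ LinearMap.range p ⊔ LinearMap.range q,
      ∀ c ∈ LinearMap.range (qs ∘ₗ ps), (inner ℂ b c : ℂ) = 0) ∧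
    Nonempty ((LinearMap.ker (deltaA p q ps qs) : Submodule ℂ H) ≃ₗ[ℂ]
      (LinearMap.ker (p ∘ₗ q) : Submodule ℂ H) ⧸
        Submodule.comap (LinearMap.ker (p ∘ₗ q)).subtype
          (LinearMap.range p ⊔ LinearMap.range q)) := by
  set V := range p ⊔ range q
  set W := range (qs ∘ₗ ps)
  have hK : ker (deltaA p q ps qs) = (V ⊔ W)ᗮ := (orthogonal_sup_eq_ker_deltaA hps hqs).symm
  have hW : ker (p ∘ₗ q) = Wᗮ := ker_comp_eq_orthogonal_range hps hqs
  have hVW : V ≤ Wᗮ := hW ▸ range_sup_range_le_ker_comp hp hq hpq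
  rw [hK, hW]
  refine ⟨fun v => ?_, fun a ha b hb => inner_left_of_mem_orthogonal (mem_sup_left hb) ha,
    fun a ha c hc => inner_left_of_mem_orthogonal (mem_sup_right hc) ha,
    fun b hb c hc => inner_left_of_mem_orthogonal hc (hVW hb), ⟨?_⟩⟩
  · obtain ⟨t, ht, a, ha, rfl⟩ := mem_sup.mp
      ((V ⊔ W).sup_orthogonal_of_hasOrthogonalProjection ▸ mem_top : v ∈ V ⊔ W ⊔ (V ⊔ W)ᗮ)
    obtain ⟨b, hb, c, hc, rfl⟩ := mem_sup.mp ht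
    exact ⟨a, ha, b, hb, c, hc, by abel⟩
  · refine equivQuotientComapOfDisjointOfSupEq ?_ ?_
    · exact (orthogonal_disjoint V).symm.mono_left (orthogonal_le le_sup_left)
    · rw [sup_comm, ← inf_orthogonal, sup_orthogonal_inf_of_hasOrthogonalProjection hVW]
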